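/- arXiv:1807.05543 — 6 statements merged into one kernel-verified Lean document; each statement's English description precedes it below -/
import Mathlib

section
/- For every γ̄ > 0 and every g_u ≥ 0, the integral ∫₀^{g_u} log₂(1 + γ̄ g) e^{−g} dg equals (e^{1/γ̄} / ln 2) · (E₁(1/γ̄) − E₁(1/γ̄ + g_u)) − e^{−g_u} log₂(1 + γ̄ g_u). -/
/-! Integrate by parts against `e^{-g}`: `log₂ (1 + γ g)` differentiates to
`1 / ((g + 1/γ) ln 2)`, and the shift `t = g + 1/γ` turns the remaining integral
`∫₀^{g_u} e^{-g} / (g + 1/γ) dg` into `e^{1/γ} (E₁(1/γ) − E₁(1/γ + g_u))`. -/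

open MeasureTheory Real

/-- The exponential integral function `E₁(z) = ∫_z^∞ e^{−t}/t dt`. -/
noncomputable def expInt (z : ℝ) : ℝ := ∫ t in Set.Ioi z, Real.exp (-t) / t

open intervalIntegral

lemma integrableOn_exp_neg_div_Ioi {a : ℝ} (ha : 0 < a) :
    IntegrableOn (fun t => exp (-t) / t) (Set.Ioi a) := by
  have hmeas : AEStronglyMeasurable (fun t => exp (-t) / t) (volume.restrict (Set.Ioi a)) :=
    ((continuous_exp.comp continuous_neg).continuousOn.div continuousOn_id
      fun t ht => (ha.trans ht).ne').aestronglyMeasurable measurableSet_Ioi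
  refine ((exp_neg_integrableOn_Ioi a one_pos).div_const a).mono hmeas ?_
  filter_upwards [ae_restrict_mem measurableSet_Ioi] with t (ht : a < t)
  rw [norm_div, norm_div, norm_of_nonneg (exp_pos _).le, norm_of_nonneg (exp_pos _).le,
    norm_of_nonneg (ha.trans ht).le, norm_of_nonneg ha.le, neg_one_mul]
  exact div_le_div_of_nonneg_left (exp_pos _).le ha ht.le

lemma expInt_sub_expInt {a b : ℝ} (ha : 0 < a) (hab : a ≤ b) :
    expInt a - expInt b = ∫ t in a..b, exp (-t) / t := by
  have hIoi := integrableOn_exp_neg_div_Ioi ha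
  have hsplit : expInt a = (∫ t in Set.Ioc a b, exp (-t) / t) + expInt b := by
    rw [expInt, ← Set.Ioc_union_Ioi_eq_Ioi hab, setIntegral_union (Set.Ioc_disjoint_Ioi le_rfl)
      measurableSet_Ioi (hIoi.mono_set Set.Ioc_subset_Ioi_self)
      (integrableOn_exp_neg_div_Ioi (ha.trans_le hab)), expInt]
  rw [hsplit, integral_of_le hab, add_sub_cancel_right]

lemma integral_exp_neg_div_add (c u : ℝ) :
    ∫ x in (0 : ℝ)..u, exp (-x) / (x + c) = exp c * ∫ t in c..c + u, exp (-t) / t := by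
  have hshift := integral_comp_add_right (fun t => exp (-t) / t) c (a := 0) (b := u)
  rw [zero_add, add_comm u] at hshift
  rw [← hshift, ← intervalIntegral.integral_const_mul]
  refine integral_congr fun x _ => ?_
  simp only [neg_add, exp_add, exp_neg]
  field_simp

lemma integral_mul_exp_neg_eq {f f' : ℝ → ℝ} {u : ℝ}
    (hf : ∀ x ∈ Set.uIcc 0 u, HasDerivAt f (f' x) x) (hf' : IntervalIntegrable f' volume 0 u) :
    ∫ x in (0 : ℝ)..u, f x * exp (-x)
      = f 0 - exp (-u) * f u + ∫ x in (0 : ℝ)..u, f' x * exp (-x) := by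
  have hexp : ∀ x ∈ Set.uIcc 0 u, HasDerivAt (fun x => -exp (-x)) (exp (-x)) x := fun x _ => by
    simpa using ((hasDerivAt_neg x).exp).fun_neg
  rw [integral_mul_deriv_eq_deriv_mul hf hexp hf'
    ((by fun_prop : Continuous fun x => exp (-x)).intervalIntegrable 0 u)]
  simp only [neg_zero, exp_zero, mul_neg, intervalIntegral.integral_neg]
  ring

lemma hasDerivAt_logb_one_add_mul {γ x : ℝ} (hγ : γ ≠ 0) (hx : 1 + γ * x ≠ 0) :
    HasDerivAt (fun g => logb 2 (1 + γ * g)) ((x + 1 / γ)⁻¹ / log 2) x := by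
  have h := ((((hasDerivAt_id x).const_mul γ).const_add 1).log hx).div_const (log 2)
  refine h.congr_deriv ?_
  simp only [id, mul_one]
  field_simp
  rw [add_comm (γ * x), div_self hx]

/-- Closed-form ergodic throughput of the PHAT-IP scheme (Theorem 1). -/
theorem phat_ip_ergodic_throughput (γ : ℝ) (hγ : 0 < γ) (gu : ℝ) (hgu : 0 ≤ gu) :
    ∫ g in (0:ℝ)..gu, Real.logb 2 (1 + γ * g) * Real.exp (-g)
      = Real.exp (1 / γ) / Real.log 2 * (expInt (1 / γ) - expInt (1 / γ + gu))
        - Real.exp (-gu) * Real.logb 2 (1 + γ * gu) := by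
  have hpos : ∀ x ∈ Set.uIcc 0 gu, 0 < x + 1 / γ := fun x hx => by
    rw [Set.uIcc_of_le hgu] at hx
    exact add_pos_of_nonneg_of_pos hx.1 (by positivity)
  have hderiv : ∀ x ∈ Set.uIcc 0 gu,
      HasDerivAt (fun g => logb 2 (1 + γ * g)) ((x + 1 / γ)⁻¹ / log 2) x := fun x hx =>
    hasDerivAt_logb_one_add_mul hγ.ne' (by nlinarith [hpos x hx, mul_one_div_cancel hγ.ne'])
  have hderiv_int : IntervalIntegrable (fun x => (x + 1 / γ)⁻¹ / log 2) volume 0 gu :=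
    ((continuousOn_id.add continuousOn_const).inv₀ fun x hx => (hpos x hx).ne').div_const _
      |>.intervalIntegrable
  have hint : ∫ x in (0 : ℝ)..gu, (x + 1 / γ)⁻¹ / log 2 * exp (-x)
      = (∫ x in (0 : ℝ)..gu, exp (-x) / (x + 1 / γ)) / log 2 := by
    rw [← intervalIntegral.integral_div]
    exact integral_congr fun x _ => by ring
  rw [integral_mul_exp_neg_eq hderiv hderiv_int, hint, integral_exp_neg_div_add,
    expInt_sub_expInt (by positivity) (by linarith)]
  simp only [mul_zero, add_zero, logb_one]
  ring
end

section
/- Fix a constant C > 0 and define f(g) = log₂(C · (g + 1) e^{−g} / (1 − e^{−g})) · (1 − e^{−g}) for g > 0. Then at every g > 0 satisfying C · (g + 1) e^{−g} / (1 − e^{−g}) ≥ 1, the second derivative of f is strictly negative; in particular, f is strictly concave on any interval contained in the set where C · (g + 1) e^{−g} / (1 − e^{−g}) ≥ 1. -/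
/-!
For `g > 0` write `u = 1 - e^{-g}` and `L = log γ̄ = log C + log (g + 1) - g - log u`, so that
`f = (L / log 2) · u` and `f'' = (L'' u + 2 L' u' + L u'') / log 2` with `u' = e^{-g} = -u''`.
The part `L'' u + 2 L' u'` simplifies to `-(e^{-g} (g + 1 - u)² + u³) / (u (g + 1)²) < 0`,
while `L u'' = -L e^{-g} ≤ 0` precisely because `γ̄ ≥ 1`.
-/

open Real Filter Topology

theorem hasDerivAt_deriv_mul {a b a' b' : ℝ → ℝ} {x a'' b'' : ℝ}
    (ha : ∀ᶠ y in 𝓝 x, HasDerivAt a (a' y) y) (hb : ∀ᶠ y in 𝓝 x, HasDerivAt b (b' y) y)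
    (ha' : HasDerivAt a' a'' x) (hb' : HasDerivAt b' b'' x) :
    HasDerivAt (deriv (a * b)) (a'' * b x + 2 * (a' x * b' x) + a x * b'') x := by
  have hderiv : deriv (a * b) =ᶠ[𝓝 x] fun y => a' y * b y + a y * b' y := by
    filter_upwards [ha, hb] with y hay hby
    exact (hay.mul hby).deriv
  exact (((ha'.mul hb.self_of_nhds).add (ha.self_of_nhds.mul hb')).congr_of_eventuallyEq
    hderiv).congr_deriv (by ring)

theorem one_sub_exp_neg_pos {g : ℝ} (hg : 0 < g) : 0 < 1 - exp (-g) := by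
  simpa using hg

noncomputable def uplinkSnr (C g : ℝ) : ℝ := C * (g + 1) * exp (-g) / (1 - exp (-g))

theorem log_uplinkSnr {C g : ℝ} (hC : 0 < C) (hg : 0 < g) :
    log (uplinkSnr C g) = log C + log (g + 1) - g - log (1 - exp (-g)) := by
  have hg1 : 0 < g + 1 := by linarith
  rw [uplinkSnr, log_div (by positivity) (one_sub_exp_neg_pos hg).ne', log_mul (by positivity)
    (exp_pos _).ne', log_mul hC.ne' hg1.ne', log_exp]
  ring

theorem hasDerivAt_one_sub_exp_neg (g : ℝ) :
    HasDerivAt (fun x => 1 - exp (-x)) (exp (-g)) g := by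
  simpa using ((hasDerivAt_neg g).exp).const_sub 1

theorem hasDerivAt_exp_neg (g : ℝ) :
    HasDerivAt (fun x => exp (-x)) (-exp (-g)) g := by
  simpa using (hasDerivAt_neg g).exp

theorem hasDerivAt_log_uplinkSnr {C g : ℝ} (hC : 0 < C) (hg : 0 < g) :
    HasDerivAt (fun x => log (uplinkSnr C x))
      ((g + 1)⁻¹ - 1 - exp (-g) / (1 - exp (-g))) g := by
  have hlog : HasDerivAt (fun x => log C + log (x + 1) - x - log (1 - exp (-x)))
      (0 + 1 / (g + 1) - 1 - exp (-g) / (1 - exp (-g))) g :=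
    (((hasDerivAt_const g _).add (((hasDerivAt_id g).add_const 1).log (by positivity))).sub
      (hasDerivAt_id g)).sub ((hasDerivAt_one_sub_exp_neg g).log (one_sub_exp_neg_pos hg).ne')
  refine (hlog.congr_of_eventuallyEq ?_).congr_deriv (by ring)
  filter_upwards [Ioi_mem_nhds hg] with x hx using log_uplinkSnr hC hx

theorem hasDerivAt_deriv_log_uplinkSnr {g : ℝ} (hg : 0 < g) :
    HasDerivAt (fun x => (x + 1)⁻¹ - 1 - exp (-x) / (1 - exp (-x)))
      (-((g + 1) ^ 2)⁻¹ + exp (-g) / (1 - exp (-g)) ^ 2) g := by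
  have hu := (one_sub_exp_neg_pos hg).ne'
  have h := ((((hasDerivAt_id' g).add_const 1).inv (by positivity)).sub_const 1).sub
    ((hasDerivAt_exp_neg g).div (hasDerivAt_one_sub_exp_neg g) hu)
  refine h.congr_deriv ?_
  field_simp
  ring

theorem second_deriv_numerator_neg {p E L : ℝ} (hp : 0 < p) (hE : 0 < E) (hE1 : E < 1)
    (hL : 0 ≤ L) :
    (-(p ^ 2)⁻¹ + E / (1 - E) ^ 2) * (1 - E) + 2 * ((p⁻¹ - 1 - E / (1 - E)) * E)
      + L * -E < 0 := by
  have hu : 0 < 1 - E := by linarith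
  have key : (-(p ^ 2)⁻¹ + E / (1 - E) ^ 2) * (1 - E) + 2 * ((p⁻¹ - 1 - E / (1 - E)) * E)
      = -((E * (p - (1 - E)) ^ 2 + (1 - E) ^ 3) / ((1 - E) * p ^ 2)) := by
    field_simp
    ring
  rw [key]
  have : 0 < (E * (p - (1 - E)) ^ 2 + (1 - E) ^ 3) / ((1 - E) * p ^ 2) := by positivity
  nlinarith

/-- High-SNR asymptotic throughput of the PHAT-IP scheme:
`f(g) = log₂(C (g+1) e^{−g} / (1 − e^{−g})) · (1 − e^{−g})` has strictly negative second
derivative at every `g > 0` where the logarithm's argument is at least 1; in particular,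
`f` is strictly concave on any interval (i.e. convex subset of `ℝ`) contained in that set. -/
theorem phat_ip_high_snr_concave (C : ℝ) (hC : 0 < C)
    (f : ℝ → ℝ)
    (hf : f = fun g => Real.logb 2 (C * (g + 1) * Real.exp (-g) / (1 - Real.exp (-g)))
      * (1 - Real.exp (-g))) :
    (∀ g : ℝ, 0 < g → 1 ≤ C * (g + 1) * Real.exp (-g) / (1 - Real.exp (-g)) →
        deriv (deriv f) g < 0) ∧
      ∀ s : Set ℝ, Convex ℝ s →
        s ⊆ {g : ℝ | 0 < g ∧ 1 ≤ C * (g + 1) * Real.exp (-g) / (1 - Real.exp (-g))} →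
        StrictConcaveOn ℝ s f := by
  set a : ℝ → ℝ := fun x => logb 2 (uplinkSnr C x)
  have hfau : f = a * fun x => 1 - exp (-x) := hf
  have ha : ∀ y, 0 < y →
      HasDerivAt a (((y + 1)⁻¹ - 1 - exp (-y) / (1 - exp (-y))) / log 2) y :=
    fun y hy => (hasDerivAt_log_uplinkSnr hC hy).div_const (log 2)
  have hf_neg : ∀ g, 0 < g → 1 ≤ uplinkSnr C g → deriv (deriv f) g < 0 := by
    intro g hg hsnr
    have ha' := (hasDerivAt_deriv_log_uplinkSnr hg).div_const (log 2)
    have ha_near : ∀ᶠ y in 𝓝 g, HasDerivAt a _ y :=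
      eventually_of_mem (Ioi_mem_nhds hg) ha
    rw [hfau, (hasDerivAt_deriv_mul ha_near (Eventually.of_forall hasDerivAt_one_sub_exp_neg)
      ha' (hasDerivAt_exp_neg g)).deriv]
    have hnum := second_deriv_numerator_neg (by linarith : 0 < g + 1) (exp_pos (-g))
      (exp_lt_one_iff.mpr (neg_neg_of_pos hg)) (log_nonneg hsnr)
    refine lt_of_eq_of_lt ?_ (div_neg_of_neg_of_pos hnum (log_pos one_lt_two))
    simp only [a, logb]
    ring
  refine ⟨hf_neg, fun s hs hsub => strictConcaveOn_of_deriv2_neg' hs ?_ ?_⟩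
  · intro x hx
    rw [hfau]
    exact ((ha x (hsub hx).1).mul
      (hasDerivAt_one_sub_exp_neg x)).continuousAt.continuousWithinAt
  · intro x hx
    exact hf_neg x (hsub hx).1 (hsub hx).2
end

section
/- The function g ↦ ln(e^{g} − g − 1) is strictly concave on the interval (0, ∞). (Note that e^{g} − g − 1 > 0 for all g > 0, so the function is well defined.) -/
open Real

/-- `g ↦ ln(e^g − g − 1)` is strictly concave on `(0, ∞)`; note that `e^g − g − 1 > 0`
for all `g > 0`, so the function is well defined there. -/
theorem log_exp_sub_linear_strictConcaveOn :
    (∀ g : ℝ, 0 < g → 0 < Real.exp g - g - 1) ∧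
      StrictConcaveOn ℝ (Set.Ioi (0 : ℝ)) (fun g => Real.log (Real.exp g - g - 1)) := by
  have hpos : ∀ g : ℝ, 0 < g → 0 < Real.exp g - g - 1 := by
    intro g hg
    have := add_one_lt_exp (ne_of_gt hg)
    linarith
  refine ⟨hpos, ?_⟩
  have hderiv : ∀ x ∈ Set.Ioi (0 : ℝ),
      HasDerivAt (fun g => Real.log (Real.exp g - g - 1))
        ((Real.exp x - 1) / (Real.exp x - x - 1)) x := by
    intro x hx
    have h1 : HasDerivAt (fun g : ℝ => Real.exp g - g - 1) (Real.exp x - 1) x := by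
      simpa using ((Real.hasDerivAt_exp x).sub (hasDerivAt_id x)).sub_const 1
    exact h1.log (ne_of_gt (hpos x hx))
  have hEq : Set.EqOn (deriv fun g => Real.log (Real.exp g - g - 1))
      (fun x => (Real.exp x - 1) / (Real.exp x - x - 1)) (Set.Ioi 0) := by
    intro x hx
    exact (hderiv x hx).deriv
  apply strictConcaveOn_of_deriv2_neg (convex_Ioi 0)
  · exact (((continuous_exp.sub continuous_id).sub continuous_const).continuousOn).log
      fun x hx => ne_of_gt (hpos x hx)
  · intro x hx
    rw [interior_Ioi] at hx
    have hd2 : HasDerivAt (fun y : ℝ => (Real.exp y - 1) / (Real.exp y - y - 1))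
        ((Real.exp x * (Real.exp x - x - 1) - (Real.exp x - 1) * (Real.exp x - 1)) /
          (Real.exp x - x - 1) ^ 2) x := by
      have hn : HasDerivAt (fun y : ℝ => Real.exp y - 1) (Real.exp x) x := by
        simpa using (Real.hasDerivAt_exp x).sub_const 1
      have hdd : HasDerivAt (fun y : ℝ => Real.exp y - y - 1) (Real.exp x - 1) x := by
        simpa using ((Real.hasDerivAt_exp x).sub (hasDerivAt_id x)).sub_const 1
      exact hn.div hdd (ne_of_gt (hpos x hx))
    have key : deriv (deriv fun g => Real.log (Real.exp g - g - 1)) x =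
        (Real.exp x * (Real.exp x - x - 1) - (Real.exp x - 1) * (Real.exp x - 1)) /
          (Real.exp x - x - 1) ^ 2 := by
      have hmem : Set.Ioi (0 : ℝ) ∈ nhds x := isOpen_Ioi.mem_nhds hx
      rw [Filter.EventuallyEq.deriv_eq (Filter.eventuallyEq_of_mem hmem hEq)]
      exact hd2.deriv
    show deriv^[2] (fun g => Real.log (Real.exp g - g - 1)) x < 0
    rw [Function.iterate_succ, Function.iterate_one, Function.comp_apply, key]
    apply div_neg_of_neg_of_pos
    · have h2 : -x + 1 < Real.exp (-x) := add_one_lt_exp (by have : (0:ℝ) < x := hx; linarith)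
      have h3 : Real.exp (-x) * Real.exp x = 1 := by
        rw [← Real.exp_add]; simp
      nlinarith [Real.exp_pos x, Real.exp_pos (-x)]
    · exact pow_pos (hpos x hx) 2
end

section
/- For every fixed g_u > 0, lim_{γ̄ → ∞} (∫₀^{g_u} log₂(1 + γ̄ g) e^{−g} dg) / log₂(γ̄) = 1 − e^{−g_u}. -/
/-!
Since `log (1 + γ g) = log γ + log (γ⁻¹ + g)`, the throughput integral is `log γ ∫₀^{g_u} e^{-g} dg`
plus a remainder. For `γ ≥ 1` the remainder integrand lies between `log g` and `log (1 + g)`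
(times the weight), both integrable on `[0, g_u]` because the singularity of `log` at `0` is
integrable; so the remainder stays bounded and vanishes after division by `log γ`.
-/

open MeasureTheory Real Filter Topology Asymptotics intervalIntegral Set

lemma log_one_add_mul_eq_log_add_log_inv_add {γ g : ℝ} (hγ : 0 < γ) (hg : 0 ≤ g) :
    log (1 + γ * g) = log γ + log (γ⁻¹ + g) := by
  rw [← log_mul hγ.ne' (by positivity), mul_add, mul_inv_cancel₀ hγ.ne']

lemma abs_log_inv_add_le {γ g : ℝ} (hγ : 1 ≤ γ) (hg : 0 < g) :
    |log (γ⁻¹ + g)| ≤ |log g| + log (1 + g) := by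
  have hinv_pos : 0 < γ⁻¹ := inv_pos.2 (by linarith)
  have hinv_le : γ⁻¹ ≤ 1 := inv_le_one_of_one_le₀ hγ
  have hlower : log g ≤ log (γ⁻¹ + g) := log_le_log hg (by linarith)
  have hupper : log (γ⁻¹ + g) ≤ log (1 + g) := log_le_log (by linarith) (by linarith)
  have hlog_one_add : 0 ≤ log (1 + g) := log_nonneg (by linarith)
  rw [abs_le]
  constructor <;> linarith [neg_abs_le (log g), abs_nonneg (log g)]

lemma integral_exp_neg (a b : ℝ) : ∫ x in a..b, exp (-x) = exp (-a) - exp (-b) := by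
  rw [integral_comp_neg (fun x => exp x), integral_exp]

section LogWeighted

variable {b : ℝ} {w : ℝ → ℝ}

lemma intervalIntegrable_log_inv_add_mul (hb : 0 ≤ b) (hw : Continuous w) {γ : ℝ}
    (hγ : 0 < γ) : IntervalIntegrable (fun g => log (γ⁻¹ + g) * w g) volume 0 b := by
  refine (ContinuousOn.mul ?_ hw.continuousOn).intervalIntegrable
  refine ContinuousOn.log (by fun_prop) fun g hg => ?_
  rw [uIcc_of_le hb] at hg
  exact (add_pos_of_pos_of_nonneg (inv_pos.2 hγ) hg.1).ne'

lemma integral_log_one_add_mul_mul (hb : 0 ≤ b) (hw : Continuous w) {γ : ℝ} (hγ : 0 < γ) :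
    ∫ g in 0..b, log (1 + γ * g) * w g
      = log γ * (∫ g in 0..b, w g) + ∫ g in 0..b, log (γ⁻¹ + g) * w g := by
  have hsplit : EqOn (fun g => log (1 + γ * g) * w g)
      (fun g => log γ * w g + log (γ⁻¹ + g) * w g) (uIcc 0 b) := by
    intro g hg
    rw [uIcc_of_le hb] at hg
    simp only [log_one_add_mul_eq_log_add_log_inv_add hγ hg.1, add_mul]
  rw [integral_congr hsplit, integral_add ((hw.intervalIntegrable 0 b).const_mul _)
    (intervalIntegrable_log_inv_add_mul hb hw hγ), intervalIntegral.integral_const_mul]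

lemma isBigO_integral_log_inv_add_mul (hb : 0 ≤ b) (hw : Continuous w) :
    (fun γ => ∫ g in 0..b, log (γ⁻¹ + g) * w g) =O[atTop] fun _ => (1 : ℝ) := by
  have hlog_one_add : IntervalIntegrable (fun g => log (1 + g)) volume 0 b := by
    refine ContinuousOn.intervalIntegrable (ContinuousOn.log (by fun_prop) fun g hg => ?_)
    rw [uIcc_of_le hb] at hg
    linarith [hg.1]
  have hdom : IntervalIntegrable (fun g => (|log g| + log (1 + g)) * |w g|) volume 0 b :=
    (intervalIntegrable_log'.abs.add hlog_one_add).mul_continuousOn hw.abs.continuousOn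
  refine IsBigO.of_bound (∫ g in 0..b, (|log g| + log (1 + g)) * |w g|) ?_
  filter_upwards [eventually_ge_atTop 1] with γ hγ
  rw [norm_one, mul_one]
  refine norm_integral_le_of_norm_le hb (Eventually.of_forall fun g hg => ?_) hdom
  rw [norm_mul, norm_eq_abs, norm_eq_abs]
  exact mul_le_mul_of_nonneg_right (abs_log_inv_add_le hγ hg.1) (abs_nonneg _)

theorem tendsto_integral_log_one_add_mul_mul_div_log (hb : 0 ≤ b) (hw : Continuous w) :
    Tendsto (fun γ => (∫ g in 0..b, log (1 + γ * g) * w g) / log γ) atTop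
      (𝓝 (∫ g in 0..b, w g)) := by
  have hremainder := ((isBigO_integral_log_inv_add_mul hb hw).trans_isLittleO
    isLittleO_const_log_atTop).tendsto_div_nhds_zero
  have hlim := hremainder.const_add (∫ g in 0..b, w g)
  rw [add_zero] at hlim
  refine hlim.congr' ?_
  filter_upwards [eventually_gt_atTop 1] with γ hγ
  rw [integral_log_one_add_mul_mul hb hw (by linarith), _root_.add_div,
    mul_div_cancel_left₀ _ (log_pos hγ).ne']

end LogWeighted

/-- High-SNR asymptotics of the PHAT-IP ergodic throughput:
`∫₀^{g_u} log₂(1 + γ̄ g) e^{−g} dg ≈ log₂(γ̄) (1 − e^{−g_u})` as `γ̄ → ∞`. -/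
theorem phat_ip_high_snr_limit (gu : ℝ) (hgu : 0 < gu) :
    Tendsto
      (fun γ : ℝ => (∫ g in (0:ℝ)..gu, Real.logb 2 (1 + γ * g) * Real.exp (-g))
        / Real.logb 2 γ)
      atTop (nhds (1 - Real.exp (-gu))) := by
  have hlim := tendsto_integral_log_one_add_mul_mul_div_log (w := fun g => exp (-g)) hgu.le
    (by fun_prop)
  rw [integral_exp_neg, neg_zero, exp_zero] at hlim
  refine hlim.congr fun γ => ?_
  simp only [logb, div_mul_eq_mul_div, intervalIntegral.integral_div]
  exact (div_div_div_cancel_right₀ (log_pos one_lt_two).ne' _ _).symm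
end

section
/- For every fixed g_l ≥ 0, lim_{γ̄ → ∞} (∫_{g_l}^∞ log₂(1 + γ̄ g) e^{−g} dg) / log₂(γ̄) = e^{−g_l}. -/
open MeasureTheory Real Filter

lemma logb_ratio (x y e : ℝ) :
    Real.logb 2 x * e / Real.logb 2 y = Real.log x * e / Real.log y := by
  have h2 : Real.log 2 ≠ 0 := by positivity
  rw [Real.logb, Real.logb, div_mul_eq_mul_div, div_div_div_cancel_right₀ h2]

lemma bound_integrable (gl : ℝ) (hgl : 0 ≤ gl) :
    IntegrableOn (fun g : ℝ => (1 + g) * Real.exp (-g)) (Set.Ioi gl) := by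
  have h1 : IntegrableOn (fun g : ℝ => Real.exp (-g)) (Set.Ioi gl) := by
    simpa using exp_neg_integrableOn_Ioi gl (by norm_num : (0:ℝ) < 1)
  have h2 : IntegrableOn (fun g : ℝ => g * Real.exp (-g)) (Set.Ioi gl) := by
    have h := (Real.GammaIntegral_convergent (by norm_num : (0:ℝ) < 2)).mono_set
      (Set.Ioi_subset_Ioi hgl)
    refine IntegrableOn.congr_fun h ?_ measurableSet_Ioi
    intro x hx
    norm_num [Real.rpow_one, mul_comm]
  have h3 : IntegrableOn (fun g : ℝ => Real.exp (-g) + g * Real.exp (-g)) (Set.Ioi gl) :=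
    h1.add h2
  refine IntegrableOn.congr_fun h3 (fun x _ => by ring) measurableSet_Ioi

lemma pointwise_lim (g : ℝ) (hg : 0 < g) :
    Tendsto (fun γ : ℝ => Real.logb 2 (1 + γ * g) * Real.exp (-g) / Real.logb 2 γ)
      atTop (nhds (Real.exp (-g))) := by
  have heq : ∀ᶠ γ : ℝ in atTop,
      Real.logb 2 (1 + γ * g) * Real.exp (-g) / Real.logb 2 γ
        = (1 + Real.log (γ⁻¹ + g) / Real.log γ) * Real.exp (-g) := by
    filter_upwards [eventually_gt_atTop 1] with γ hγ
    have hγ0 : (0:ℝ) < γ := by linarith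
    have hlogγ : Real.log γ ≠ 0 := ne_of_gt (Real.log_pos hγ)
    have h1 : (1 : ℝ) + γ * g = γ * (γ⁻¹ + g) := by field_simp
    have h2' : Real.log (1 + γ * g) = Real.log γ + Real.log (γ⁻¹ + g) := by
      rw [h1, Real.log_mul (ne_of_gt hγ0) (by positivity)]
    rw [logb_ratio, h2']
    field_simp
  refine Tendsto.congr' (EventuallyEq.symm heq) ?_
  have hlim : Tendsto (fun γ : ℝ => Real.log (γ⁻¹ + g) / Real.log γ) atTop (nhds 0) := by
    have h0 : Tendsto (fun γ : ℝ => γ⁻¹ + g) atTop (nhds (0 + g)) :=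
      tendsto_inv_atTop_zero.add tendsto_const_nhds
    rw [zero_add] at h0
    have hcont : Tendsto (fun γ : ℝ => Real.log (γ⁻¹ + g)) atTop (nhds (Real.log g)) :=
      (Real.continuousAt_log (ne_of_gt hg)).tendsto.comp h0
    exact hcont.div_atTop Real.tendsto_log_atTop
  have := ((tendsto_const_nhds (x := (1:ℝ)) (f := atTop)).add hlim).mul
    (tendsto_const_nhds (x := Real.exp (-g)))
  simpa using this

/-- High-SNR asymptotics of the PHAT-PI ergodic throughput:
`∫_{g_l}^∞ log₂(1 + γ̄ g) e^{−g} dg ≈ log₂(γ̄) e^{−g_l}` as `γ̄ → ∞`. -/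
theorem phat_pi_high_snr_limit (gl : ℝ) (hgl : 0 ≤ gl) :
    Tendsto
      (fun γ : ℝ => (∫ g in Set.Ioi gl, Real.logb 2 (1 + γ * g) * Real.exp (-g))
        / Real.logb 2 γ)
      atTop (nhds (Real.exp (-gl))) := by
  have key : Tendsto (fun γ : ℝ => ∫ g in Set.Ioi gl,
      Real.logb 2 (1 + γ * g) * Real.exp (-g) / Real.logb 2 γ) atTop
      (nhds (∫ g in Set.Ioi gl, Real.exp (-g))) := by
    apply tendsto_integral_filter_of_dominated_convergence
      (bound := fun g => (1 + g) * Real.exp (-g))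
    · filter_upwards with γ
      apply Measurable.aestronglyMeasurable
      have hm : Measurable fun g : ℝ => Real.log (1 + γ * g) := by
        exact Real.measurable_log.comp (measurable_const.add (measurable_id.const_mul γ))
      simp only [Real.logb]
      exact ((hm.div_const _).mul (Real.measurable_exp.comp measurable_neg)).div_const _
    · filter_upwards [eventually_ge_atTop (Real.exp 1)] with γ hγ
      filter_upwards [ae_restrict_mem measurableSet_Ioi] with g hg
      have hg0 : 0 < g := lt_of_le_of_lt hgl hg
      have hγ1 : (1:ℝ) ≤ γ := le_trans (by nlinarith [Real.add_one_le_exp (1:ℝ)]) hγ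
      have hγ0 : (0:ℝ) < γ := by linarith
      have hlogγ : (1:ℝ) ≤ Real.log γ := (Real.le_log_iff_exp_le hγ0).mpr hγ
      have hx1 : (1:ℝ) ≤ 1 + γ * g := by nlinarith
      have hlogx : 0 ≤ Real.log (1 + γ * g) := Real.log_nonneg hx1
      have hub : Real.log (1 + γ * g) ≤ Real.log γ * (1 + g) := by
        have h1 : Real.log (1 + γ * g) ≤ Real.log (γ * (1 + g)) := by
          apply Real.log_le_log (by linarith)
          nlinarith
        have h2 : Real.log (γ * (1 + g)) = Real.log γ + Real.log (1 + g) := by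
          rw [Real.log_mul (ne_of_gt hγ0) (by positivity)]
        have h3 : Real.log (1 + g) ≤ g := by
          have := Real.log_le_sub_one_of_pos (x := 1 + g) (by linarith)
          linarith
        nlinarith
      rw [logb_ratio, Real.norm_eq_abs, abs_of_nonneg (by positivity)]
      rw [div_le_iff₀ (by linarith)]
      have hexp : 0 ≤ Real.exp (-g) := (Real.exp_pos _).le
      calc Real.log (1 + γ * g) * Real.exp (-g)
          ≤ Real.log γ * (1 + g) * Real.exp (-g) := by nlinarith
        _ = (1 + g) * Real.exp (-g) * Real.log γ := by ring
    · exact bound_integrable gl hgl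
    · filter_upwards [ae_restrict_mem measurableSet_Ioi] with g hg
      exact pointwise_lim g (lt_of_le_of_lt hgl hg)
  rw [integral_exp_neg_Ioi] at key
  refine key.congr fun γ => ?_
  rw [integral_div]
end

section
/- For every γ > 1, there exists a unique s* > 0 satisfying γ(1 + s*)/(1 + γ s*) = ln(1 + γ s*), and the function s ↦ ln(1 + γ s)/(1 + s) on [0, ∞) attains its maximum exactly at s = s*. -/
/-!
With `u = 1 + γ s`, the stationarity gap `γ (1 + s)/(1 + γ s) - ln(1 + γ s)` equals
`1 + (γ - 1)/u - ln u`, which for `γ ≥ 1` is strictly decreasing in `s`; it starts at `γ > 0`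
and is negative once `ln u ≥ γ`, so it has exactly one positive zero `s*`. The derivative of the
rate `ln(1 + γ s)/(1 + s)` is this gap divided by `(1 + s)²`, so the rate strictly increases
up to `s*` and strictly decreases after it.
-/

open Real Set

noncomputable def httRate (γ s : ℝ) : ℝ := log (1 + γ * s) / (1 + s)

noncomputable def httStationarityGap (γ s : ℝ) : ℝ :=
  γ * (1 + s) / (1 + γ * s) - log (1 + γ * s)

section Gap

variable {γ : ℝ}

theorem httStationarityGap_zero (γ : ℝ) : httStationarityGap γ 0 = γ := by
  simp [httStationarityGap]

theorem httStationarityGap_eq {s : ℝ} (h : 1 + γ * s ≠ 0) :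
    httStationarityGap γ s = 1 + (γ - 1) / (1 + γ * s) - log (1 + γ * s) := by
  unfold httStationarityGap
  field_simp
  ring

theorem continuousOn_httStationarityGap (hγ : 0 ≤ γ) :
    ContinuousOn (httStationarityGap γ) (Ici 0) := by
  have hpos : ∀ s ∈ Ici (0 : ℝ), 1 + γ * s ≠ 0 := fun s hs => by
    have : 0 ≤ γ * s := mul_nonneg hγ hs
    positivity
  unfold httStationarityGap
  fun_prop (disch := assumption)

theorem httStationarityGap_strictAntiOn (hγ : 1 ≤ γ) :
    StrictAntiOn (httStationarityGap γ) (Ici 0) := by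
  intro a ha b hb hab
  have hua : 0 < 1 + γ * a := by nlinarith [mem_Ici.mp ha]
  have hub : 1 + γ * a < 1 + γ * b := by nlinarith
  rw [httStationarityGap_eq (hua.trans hub).ne', httStationarityGap_eq hua.ne']
  have hfrac : (γ - 1) / (1 + γ * b) ≤ (γ - 1) / (1 + γ * a) :=
    div_le_div_of_nonneg_left (by linarith) hua hub.le
  have hlog : log (1 + γ * a) < log (1 + γ * b) := log_lt_log hua hub
  linarith

theorem httStationarityGap_exp_neg (hγ : 1 < γ) : httStationarityGap γ (exp γ) < 0 := by
  have hexp : 1 < exp γ := one_lt_exp_iff.mpr (by linarith)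
  have hu : exp γ < 1 + γ * exp γ := by nlinarith
  rw [httStationarityGap_eq (by positivity)]
  have hfrac : (γ - 1) / (1 + γ * exp γ) < γ - 1 :=
    (div_lt_iff₀ (by positivity)).mpr (by nlinarith)
  have hlog : γ < log (1 + γ * exp γ) := by
    simpa using log_lt_log (exp_pos γ) hu
  linarith

theorem exists_pos_httStationarityGap_eq_zero (hγ : 1 < γ) :
    ∃ s, 0 < s ∧ httStationarityGap γ s = 0 := by
  obtain ⟨s, hs, hgap⟩ : ∃ s ∈ Icc 0 (exp γ), httStationarityGap γ s = 0 :=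
    intermediate_value_Icc' (exp_pos γ).le
      ((continuousOn_httStationarityGap (by linarith)).mono Icc_subset_Ici_self)
      ⟨(httStationarityGap_exp_neg hγ).le, by rw [httStationarityGap_zero]; linarith⟩
  refine ⟨s, hs.1.lt_of_ne ?_, hgap⟩
  rintro rfl
  rw [httStationarityGap_zero] at hgap
  linarith

end Gap

theorem hasDerivAt_httRate {γ t : ℝ} (hγt : 1 + γ * t ≠ 0) (ht : 1 + t ≠ 0) :
    HasDerivAt (httRate γ) (httStationarityGap γ t / (1 + t) ^ 2) t := by
  have hu : HasDerivAt (fun s => 1 + γ * s) γ t := by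
    simpa using ((hasDerivAt_id t).const_mul γ).const_add 1
  have hv : HasDerivAt (fun s : ℝ => 1 + s) 1 t := (hasDerivAt_id t).const_add 1
  refine ((hu.log hγt).div hv ht).congr_deriv ?_
  unfold httStationarityGap
  field_simp

theorem apply_lt_apply_of_deriv_pos_of_deriv_neg {f f' : ℝ → ℝ} {a s : ℝ} (hle : a ≤ s)
    (hf : ∀ t ∈ Ici a, HasDerivAt f (f' t) t) (hpos : ∀ t ∈ Ioo a s, 0 < f' t)
    (hneg : ∀ t ∈ Ioi s, f' t < 0) {t : ℝ} (ht : a ≤ t) (hts : t ≠ s) : f t < f s := by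
  have hcont : ContinuousOn f (Ici a) := fun t ht => (hf t ht).continuousAt.continuousWithinAt
  rcases hts.lt_or_gt with hlt | hgt
  · refine strictMonoOn_of_deriv_pos (convex_Icc a s) (hcont.mono Icc_subset_Ici_self)
      (fun x hx => ?_) ⟨ht, hlt.le⟩ ⟨hle, le_rfl⟩ hlt
    rw [interior_Icc] at hx
    rw [(hf x (mem_Ici.mpr hx.1.le)).deriv]
    exact hpos x hx
  · refine strictAntiOn_of_deriv_neg (convex_Ici s) (hcont.mono (Ici_subset_Ici.mpr hle))
      (fun x hx => ?_) self_mem_Ici hgt.le hgt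
    rw [interior_Ici] at hx
    rw [(hf x (mem_Ici.mpr (hle.trans hx.le))).deriv]
    exact hneg x hx

/-- Optimal HTT time-sharing ratio: for `γ > 1` there is a unique `s* > 0` satisfying the
stationarity condition `γ(1 + s*)/(1 + γ s*) = ln(1 + γ s*)`, and the rate function
`s ↦ ln(1 + γ s)/(1 + s)` on `[0, ∞)` attains its maximum exactly at `s = s*`. -/
theorem htt_optimal_ratio (γ : ℝ) (hγ : 1 < γ) :
    ∃ s : ℝ, 0 < s ∧ γ * (1 + s) / (1 + γ * s) = Real.log (1 + γ * s) ∧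
      (∀ t : ℝ, 0 < t → γ * (1 + t) / (1 + γ * t) = Real.log (1 + γ * t) → t = s) ∧
      (∀ t : ℝ, 0 ≤ t → t ≠ s →
        Real.log (1 + γ * t) / (1 + t) < Real.log (1 + γ * s) / (1 + s)) := by
  obtain ⟨s, hs, hgap⟩ := exists_pos_httStationarityGap_eq_zero hγ
  have hanti := httStationarityGap_strictAntiOn hγ.le
  refine ⟨s, hs, sub_eq_zero.mp hgap, fun t ht htgap => ?_, fun t ht hts => ?_⟩
  · exact hanti.injOn ht.le hs.le (by rw [httStationarityGap, htgap, sub_self, hgap])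
  · refine apply_lt_apply_of_deriv_pos_of_deriv_neg (f := httRate γ) hs.le
      (fun x hx => hasDerivAt_httRate (by nlinarith [mem_Ici.mp hx]) (by linarith [mem_Ici.mp hx]))
      (fun x hx => div_pos ?_ (by nlinarith [hx.1]))
      (fun x hx => div_neg_of_neg_of_pos ?_ (by nlinarith [hs.trans hx])) ht hts
    · simpa [hgap] using hanti (mem_Ici.mpr hx.1.le) hs.le hx.2
    · simpa [hgap] using hanti hs.le (mem_Ici.mpr (hs.trans hx).le) hx
end
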